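/- arXiv:1505.07472 — 5 statements merged into one kernel-verified Lean document; each statement's English description precedes it below -/
import Mathlib

section
/- Let F be a field, Σ a finite alphabet, and consider formal power series over F in noncommuting variables, i.e., functions FreeMonoid Σ → F with convolution product. A series S is recognizable (there exist n, c ∈ F^{1×n}, b ∈ F^{n×1}, and matrices A_x ∈ F^{n×n} for each x ∈ Σ, such that (S, w) = c · A_{w₁} ⋯ A_{w_{|w|}} · b for all words w) if and only if S lies in a finitely generated F-subspace of the series algebra that is stable under all left shift operators L_x defined by (L_x S, w) = (S, xw). -/
/-!
A linear representation `(c, A, b)` makes the series `w ↦ v ⬝ A^w b`, `v` a row vector, a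
finitely generated space containing `S`; the shift `L_x` acts on it by `v ↦ v A_x`.
Conversely, if generators `g₁, …, gₙ` span a shift-stable space, writing `L_x gᵢ = ∑ⱼ (A_x)ᵢⱼ gⱼ`
gives `(gᵢ w)ᵢ = A^w (gᵢ [])ᵢ` by induction on `w`, so `b = (gᵢ [])ᵢ` and the coordinates `c`
of `S` form a linear representation.
-/

open Matrix

section LinearRepresentation

variable {R σ ι : Type*} [CommSemiring R] [Fintype ι] [DecidableEq ι]

def linRepSeries (A : σ → Matrix ι ι R) (b : ι → R) : (ι → R) →ₗ[R] (List σ → R) where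
  toFun v w := v ⬝ᵥ (w.map A).prod *ᵥ b
  map_add' u v := funext fun _ => add_dotProduct u v _
  map_smul' r v := funext fun _ => smul_dotProduct r v _

theorem linRepSeries_cons (A : σ → Matrix ι ι R) (b : ι → R) (v : ι → R) (x : σ)
    (w : List σ) : linRepSeries A b v (x :: w) = linRepSeries A b (v ᵥ* A x) w := by
  change v ⬝ᵥ (A x * (w.map A).prod) *ᵥ b = _
  rw [← mulVec_mulVec, dotProduct_mulVec]
  rfl

theorem shift_mem_range_linRepSeries (A : σ → Matrix ι ι R) (b : ι → R) (x : σ)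
    {T : List σ → R} (hT : T ∈ LinearMap.range (linRepSeries A b)) :
    (fun w => T (x :: w)) ∈ LinearMap.range (linRepSeries A b) := by
  obtain ⟨v, rfl⟩ := hT
  exact ⟨v ᵥ* A x, funext fun w => (linRepSeries_cons A b v x w).symm⟩

theorem eq_prod_mulVec_of_cons_eq_mulVec {g : ι → List σ → R} (A : σ → Matrix ι ι R)
    (hA : ∀ x w, (fun i => g i (x :: w)) = A x *ᵥ fun i => g i w) (w : List σ) :
    (fun i => g i w) = (w.map A).prod *ᵥ fun i => g i [] := by
  induction w with
  | nil => simp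
  | cons x w ih => rw [hA, ih, List.map_cons, List.prod_cons, mulVec_mulVec]

theorem exists_linRep_of_mem_span {g : ι → List σ → R}
    (hstab : ∀ x i, (fun w => g i (x :: w)) ∈ Submodule.span R (Set.range g))
    {S : List σ → R} (hS : S ∈ Submodule.span R (Set.range g)) :
    ∃ (c : ι → R) (A : σ → Matrix ι ι R) (b : ι → R),
      ∀ w : List σ, S w = c ⬝ᵥ (w.map A).prod *ᵥ b := by
  choose A hA using fun x i => (Submodule.mem_span_range_iff_exists_fun R).mp (hstab x i)
  obtain ⟨c, rfl⟩ := (Submodule.mem_span_range_iff_exists_fun R).mp hS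
  have hcons : ∀ x w, (fun i => g i (x :: w)) = of (A x) *ᵥ fun i => g i w := by
    intro x w
    funext i
    show (fun w => g i (x :: w)) w = _
    rw [← hA x i]
    simp [mulVec, dotProduct, Finset.sum_apply]
  refine ⟨c, fun x => of (A x), fun i => g i [], fun w => ?_⟩
  rw [← eq_prod_mulVec_of_cons_eq_mulVec _ hcons w]
  simp [dotProduct, Finset.sum_apply]

end LinearRepresentation

theorem stmt_2_general {F σ : Type*} [Field F] (S : List σ → F) :
    (∃ (n : ℕ) (c : Fin n → F) (A : σ → Matrix (Fin n) (Fin n) F) (b : Fin n → F),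
        ∀ w : List σ, S w = c ⬝ᵥ ((w.map A).prod).mulVec b) ↔
      (∃ M : Submodule F (List σ → F), M.FG ∧
        (∀ (x : σ), ∀ T ∈ M, (fun w => T (x :: w)) ∈ M) ∧ S ∈ M) := by
  constructor
  · rintro ⟨n, c, A, b, hS⟩
    exact ⟨LinearMap.range (linRepSeries A b), Submodule.fg_range _,
      fun x _ => shift_mem_range_linRepSeries A b x, c, funext fun w => (hS w).symm⟩
  · rintro ⟨M, hFG, hstab, hSM⟩
    obtain ⟨n, g, rfl⟩ := Submodule.fg_iff_exists_fin_generating_family.mp hFG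
    have hg : ∀ x i, (fun w => g i (x :: w)) ∈ Submodule.span F (Set.range g) :=
      fun x i => hstab x (g i) (Submodule.subset_span ⟨i, rfl⟩)
    exact ⟨n, exists_linRep_of_mem_span hg hSM⟩

/-- A noncommutative formal power series over a field is recognizable (admits a
linear representation) iff it lies in a finitely generated subspace of the
series algebra that is stable under all left shift operators. -/
theorem stmt_2 {F σ : Type*} [Field F] [Fintype σ] (S : List σ → F) :
    (∃ (n : ℕ) (c : Fin n → F) (A : σ → Matrix (Fin n) (Fin n) F) (b : Fin n → F),
        ∀ w : List σ, S w = c ⬝ᵥ ((w.map A).prod).mulVec b) ↔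
      (∃ M : Submodule F (List σ → F), M.FG ∧
        (∀ (x : σ), ∀ T ∈ M, (fun w => T (x :: w)) ∈ M) ∧ S ∈ M) :=
  stmt_2_general S
end

section
/- Let F be a field and S a recognizable noncommutative formal power series over F with representation (c, A, b) of dimension n, such that a := (S, 1) = c·b is invertible (nonzero) in F. Then S is invertible in the convolution algebra and S⁻¹ has the representation ((−a⁻¹c, a⁻¹), [[A(I − b a⁻¹ c), A b a⁻¹],[0, 0]], (0; 1)) of dimension n + 1. -/
/-!
Write `a = c ⬝ᵥ b`, `u = a⁻¹ • c`, `P = 1 - vecMulVec b u` and `M x = A x * P`; then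
`u ⬝ᵥ b = 1`, `P *ᵥ b = 0` and `y ᵥ* P + (y ⬝ᵥ b) • u = y`. Reading the block representation,
`T [] = a⁻¹` and `T (w ++ [x]) = -a⁻¹ (u M_w) ⬝ᵥ (A x *ᵥ b)`. Peeling off the last letter, induction
gives the two vector-valued convolution identities `T ⋆ (c A_·) = u M_·` and `S ⋆ (u M_·) = c A_·`.
Pairing the first with `b` gives `(T ⋆ S) w = u M_w ⬝ᵥ b`, which vanishes for nonempty `w` because
`P *ᵥ b = 0`; the second shows that in `(S ⋆ T) (w ++ [x])` all terms but the last add up to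
`-a⁻¹ S (w ++ [x])`, which the last term `S (w ++ [x]) a⁻¹` cancels.
-/

open Matrix

section Convolution

variable {σ R M : Type*} [Semiring R] [AddCommMonoid M] [Module R M]

def seriesConv (f : List σ → R) (g : List σ → M) (w : List σ) : M :=
  ∑ k ∈ Finset.range (w.length + 1), f (w.take k) • g (w.drop k)

theorem seriesConv_nil (f : List σ → R) (g : List σ → M) :
    seriesConv f g [] = f [] • g [] := by
  simp [seriesConv]

theorem seriesConv_append_singleton (f : List σ → R) (g : List σ → M) (w : List σ) (x : σ) :
    seriesConv f g (w ++ [x]) = seriesConv f (fun u => g (u ++ [x])) w + f (w ++ [x]) • g [] := by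
  rw [seriesConv, List.length_append, List.length_singleton, Finset.sum_range_succ,
    List.take_of_length_le (by simp), List.drop_of_length_le (by simp)]
  congr 1
  refine Finset.sum_congr rfl fun k hk => ?_
  have hk : k ≤ w.length := Nat.lt_succ_iff.mp (Finset.mem_range.mp hk)
  rw [List.take_append_of_le_length hk, List.drop_append_of_le_length hk]

end Convolution

section Projection

variable {ι R : Type*} [Fintype ι] [DecidableEq ι] [Ring R]

theorem vecMul_one_sub_vecMulVec (y b u : ι → R) :
    y ᵥ* (1 - vecMulVec b u) = y - (y ⬝ᵥ b) • u := by
  rw [vecMul_sub, vecMul_one, vecMul_vecMulVec]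

theorem one_sub_vecMulVec_mulVec_self {b u : ι → R} (hu : u ⬝ᵥ b = 1) :
    (1 - vecMulVec b u) *ᵥ b = 0 := by
  rw [sub_mulVec, one_mulVec, vecMulVec_mulVec, hu, MulOpposite.op_one, one_smul, sub_self]

end Projection

theorem List.prod_map_fromBlocks_zero_zero_append_singleton {σ l m α : Type*} [Fintype l]
    [Fintype m] [DecidableEq l] [DecidableEq m] [Semiring α] (M : σ → Matrix l l α)
    (B : σ → Matrix l m α) (w : List σ) (x : σ) :
    ((w ++ [x]).map fun y => fromBlocks (M y) (B y) 0 (0 : Matrix m m α)).prod =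
      fromBlocks ((w.map M).prod * M x) ((w.map M).prod * B x) 0 0 := by
  induction w with
  | nil => simp
  | cons y w ih =>
    rw [List.cons_append, List.map_cons, List.prod_cons, ih, fromBlocks_multiply]
    simp [Matrix.mul_assoc]

section Linear

variable {σ ι κ R : Type*} [Fintype ι] [Semiring R]

theorem seriesConv_vecMul (f : List σ → R) (g : List σ → ι → R) (N : Matrix ι κ R)
    (w : List σ) : seriesConv f g w ᵥ* N = seriesConv f (fun u => g u ᵥ* N) w := by
  simp only [seriesConv, sum_vecMul, smul_vecMul]

theorem seriesConv_dotProduct (f : List σ → R) (g : List σ → ι → R) (y : ι → R)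
    (w : List σ) : seriesConv f g w ⬝ᵥ y = seriesConv f (fun u => g u ⬝ᵥ y) w := by
  simp only [seriesConv, sum_dotProduct, smul_dotProduct, smul_eq_mul]

end Linear

namespace RecognizableSeries

variable {F σ ι : Type*} [Field F] [Fintype ι] [DecidableEq ι]
  (c : ι → F) (A : σ → Matrix ι ι F) (b : ι → F)

def reprSeries (w : List σ) : F :=
  c ⬝ᵥ (w.map A).prod *ᵥ b

theorem reprSeries_nil : reprSeries c A b [] = c ⬝ᵥ b := by
  simp [reprSeries]

theorem reprSeries_append_singleton (w : List σ) (x : σ) :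
    reprSeries c A b (w ++ [x]) = c ᵥ* (w.map A).prod ⬝ᵥ A x *ᵥ b := by
  simp [reprSeries, dotProduct_mulVec, vecMul_vecMul]

noncomputable def invTransition (x : σ) : Matrix ι ι F :=
  A x * (1 - vecMulVec b ((c ⬝ᵥ b)⁻¹ • c))

noncomputable def invSeries (w : List σ) : F :=
  Sum.elim (fun i => -(c ⬝ᵥ b)⁻¹ * c i) (fun _ : Fin 1 => (c ⬝ᵥ b)⁻¹) ⬝ᵥ
    ((w.map fun x =>
      Matrix.fromBlocks
        (A x * (1 - Matrix.vecMulVec b (fun j => (c ⬝ᵥ b)⁻¹ * c j)))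
        (Matrix.of fun i (_ : Fin 1) => ((A x).mulVec b) i * (c ⬝ᵥ b)⁻¹)
        0 0).prod).mulVec (Sum.elim 0 (fun _ : Fin 1 => 1))

theorem invSeries_nil : invSeries c A b [] = (c ⬝ᵥ b)⁻¹ := by
  simp [invSeries, dotProduct, Fintype.sum_sum_type]

theorem invSeries_append_singleton (w : List σ) (x : σ) :
    invSeries c A b (w ++ [x]) =
      ((c ⬝ᵥ b)⁻¹ • c) ᵥ* (w.map (invTransition c A b)).prod ⬝ᵥ (-(c ⬝ᵥ b)⁻¹ • (A x *ᵥ b)) := by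
  have hM : (fun x => A x * (1 - vecMulVec b fun j => (c ⬝ᵥ b)⁻¹ * c j)) = invTransition c A b :=
    rfl
  have hB : (of fun i (_ : Fin 1) => (A x *ᵥ b) i * (c ⬝ᵥ b)⁻¹) *ᵥ (fun _ => 1) =
      (c ⬝ᵥ b)⁻¹ • (A x *ᵥ b) := by
    ext; simp [mulVec, dotProduct, mul_comm]
  rw [invSeries, List.prod_map_fromBlocks_zero_zero_append_singleton, fromBlocks_mulVec,
    sumElim_dotProduct_sumElim, hM]
  simp only [Sum.elim_comp_inl, Sum.elim_comp_inr, mulVec_zero, zero_mulVec, add_zero,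
    dotProduct_zero, zero_add, ← mulVec_mulVec, hB]
  have hr : (fun i => -(c ⬝ᵥ b)⁻¹ * c i) = (-(c ⬝ᵥ b)⁻¹) • c := rfl
  rw [hr, dotProduct_mulVec]
  simp only [smul_vecMul, smul_dotProduct, dotProduct_smul, smul_eq_mul]
  ring

theorem seriesConv_invSeries_vecMul_prod (w : List σ) :
    seriesConv (invSeries c A b) (fun u => c ᵥ* (u.map A).prod) w =
      ((c ⬝ᵥ b)⁻¹ • c) ᵥ* (w.map (invTransition c A b)).prod := by
  induction w using List.reverseRecOn with
  | nil => simp [seriesConv_nil, invSeries_nil]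
  | append_singleton w x ih =>
    have hshift : (fun u => c ᵥ* ((u ++ [x]).map A).prod) =
        fun u => c ᵥ* (u.map A).prod ᵥ* A x := by
      funext u; simp [vecMul_vecMul]
    rw [seriesConv_append_singleton, hshift, ← seriesConv_vecMul, ih, invSeries_append_singleton,
      List.map_append, List.prod_append, List.map_singleton, List.prod_singleton, invTransition,
      ← vecMul_vecMul, ← vecMul_vecMul, vecMul_one_sub_vecMulVec, dotProduct_smul,
      dotProduct_mulVec, List.map_nil, List.prod_nil, vecMul_one]
    module

theorem seriesConv_reprSeries_vecMul_prod (ha : c ⬝ᵥ b ≠ 0) (w : List σ) :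
    seriesConv (reprSeries c A b)
        (fun u => ((c ⬝ᵥ b)⁻¹ • c) ᵥ* (u.map (invTransition c A b)).prod) w =
      c ᵥ* (w.map A).prod := by
  induction w using List.reverseRecOn with
  | nil =>
    simp only [seriesConv_nil, reprSeries_nil, List.map_nil, List.prod_nil, vecMul_one]
    rw [smul_smul, mul_inv_cancel₀ ha, one_smul]
  | append_singleton w x ih =>
    have hshift :
        (fun u => ((c ⬝ᵥ b)⁻¹ • c) ᵥ* ((u ++ [x]).map (invTransition c A b)).prod) =
          fun u => ((c ⬝ᵥ b)⁻¹ • c) ᵥ* (u.map (invTransition c A b)).prod ᵥ*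
            invTransition c A b x := by
      funext u; simp [vecMul_vecMul]
    rw [seriesConv_append_singleton, hshift, ← seriesConv_vecMul, ih, reprSeries_append_singleton,
      invTransition, ← vecMul_vecMul, vecMul_one_sub_vecMulVec, ← dotProduct_mulVec]
    simp [vecMul_vecMul]

theorem seriesConv_invSeries_reprSeries_append_singleton (ha : c ⬝ᵥ b ≠ 0) (w : List σ)
    (x : σ) : seriesConv (invSeries c A b) (reprSeries c A b) (w ++ [x]) = 0 := by
  have hS : reprSeries c A b = fun u => c ᵥ* (u.map A).prod ⬝ᵥ b :=
    funext fun u => dotProduct_mulVec c _ b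
  have hu : ((c ⬝ᵥ b)⁻¹ • c) ⬝ᵥ b = 1 := by
    rw [smul_dotProduct, smul_eq_mul, inv_mul_cancel₀ ha]
  rw [hS, ← seriesConv_dotProduct, seriesConv_invSeries_vecMul_prod, ← dotProduct_mulVec,
    List.map_append, List.prod_append, List.map_singleton, List.prod_singleton, invTransition,
    ← mulVec_mulVec, ← mulVec_mulVec, one_sub_vecMulVec_mulVec_self hu, mulVec_zero, mulVec_zero,
    dotProduct_zero]

theorem seriesConv_reprSeries_invSeries_append_singleton (ha : c ⬝ᵥ b ≠ 0) (w : List σ)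
    (x : σ) : seriesConv (reprSeries c A b) (invSeries c A b) (w ++ [x]) = 0 := by
  rw [seriesConv_append_singleton, funext (invSeries_append_singleton c A b · x),
    ← seriesConv_dotProduct, seriesConv_reprSeries_vecMul_prod c A b ha, invSeries_nil,
    reprSeries_append_singleton, dotProduct_smul, smul_eq_mul, smul_eq_mul]
  ring

end RecognizableSeries

open RecognizableSeries in
/-- Inverse of a recognizable series with invertible constant coefficient
`a = (S,1) = c·b`: `S` is invertible in the convolution algebra and `S⁻¹` has the
representation `((−a⁻¹c, a⁻¹), [[A(I − b a⁻¹ c), A b a⁻¹],[0, 0]], (0; 1))` of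
dimension `n + 1`. -/
theorem stmt_5 {F σ : Type*} [Field F] {n : ℕ}
    (S : List σ → F)
    (c : Fin n → F) (A : σ → Matrix (Fin n) (Fin n) F) (b : Fin n → F)
    (ha : c ⬝ᵥ b ≠ 0)
    (hS : ∀ w : List σ, S w = c ⬝ᵥ ((w.map A).prod).mulVec b) :
    ∃ T : List σ → F,
      (∀ w : List σ, T w =
        Sum.elim (fun i => -(c ⬝ᵥ b)⁻¹ * c i) (fun _ : Fin 1 => (c ⬝ᵥ b)⁻¹) ⬝ᵥ
          ((w.map fun x =>
            Matrix.fromBlocks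
              (A x * (1 - Matrix.vecMulVec b (fun j => (c ⬝ᵥ b)⁻¹ * c j)))
              (Matrix.of fun i (_ : Fin 1) => ((A x).mulVec b) i * (c ⬝ᵥ b)⁻¹)
              0 0).prod).mulVec (Sum.elim 0 (fun _ : Fin 1 => 1))) ∧
      (∀ w : List σ, (∑ k ∈ Finset.range (w.length + 1), S (w.take k) * T (w.drop k)) =
        (match w with | [] => 1 | _ => 0)) ∧
      (∀ w : List σ, (∑ k ∈ Finset.range (w.length + 1), T (w.take k) * S (w.drop k)) =
        (match w with | [] => 1 | _ => 0)) := by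
  obtain rfl : S = reprSeries c A b := funext hS
  refine ⟨invSeries c A b, fun w => rfl, fun w => ?_, fun w => ?_⟩
  · change seriesConv (reprSeries c A b) (invSeries c A b) w = _
    obtain rfl | ⟨w, x, rfl⟩ := List.eq_nil_or_concat' w
    · rw [seriesConv_nil, invSeries_nil, reprSeries_nil, smul_eq_mul]
      exact mul_inv_cancel₀ ha
    · rw [seriesConv_reprSeries_invSeries_append_singleton c A b ha]
      cases w <;> rfl
  · change seriesConv (invSeries c A b) (reprSeries c A b) w = _
    obtain rfl | ⟨w, x, rfl⟩ := List.eq_nil_or_concat' w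
    · rw [seriesConv_nil, invSeries_nil, reprSeries_nil, smul_eq_mul]
      exact inv_mul_cancel₀ ha
    · rw [seriesConv_invSeries_reprSeries_append_singleton c A b ha]
      cases w <;> rfl
end

section
/- Let A be a simple ring with center the field F. For each k ≥ 0, if an element f of the (k+1)-fold tensor product A ⊗_F A ⊗_F ⋯ ⊗_F A (viewed as multilinear generalized polynomials a₀ y₀ a₁ y₁ ⋯ y_k a_{k+1} in noncommuting variables y₀,…,y_k) evaluates to zero for all substitutions of y₀,…,y_k by elements of A, then f = 0. -/
/-!
Expand `f` in the tensor basis `e_{w₀} ⊗ ⋯ ⊗ e_{w_{k+1}}` built from an `F`-basis `(e_i)` of `A`;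
it suffices that the functions `b ↦ e_{w₀} b₀ e_{w₁} ⋯ b_k e_{w_{k+1}}` are linearly independent.
Splitting off the first factor `e_{w₀} b₀`, this follows by induction on `k` from the case of one
variable: if `∑ e_i y x_i = 0` for all `y` then every `x_i = 0`, i.e. `A ⊗_F Aᵒᵖ → End_F A` is
injective, which is where simplicity and centrality of `A` enter.
-/

open scoped TensorProduct

/-- For fixed parameters `b₀,…,b_k ∈ A`, the multilinear evaluation
`(a₀,…,a_{k+1}) ↦ a₀ b₀ a₁ b₁ ⋯ b_k a_{k+1}` of a multilinear generalized
polynomial. -/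
noncomputable def evalGP (F A : Type*) [Field F] [Ring A] [Algebra F A]
    (k : ℕ) (b : Fin (k + 1) → A) :
    MultilinearMap F (fun _ : Fin (k + 2) => A) A :=
  (MultilinearMap.mkPiAlgebraFin F (k + 2) A).compLinearMap
    (fun i => if h : (i : ℕ) < k + 1 then LinearMap.mulRight F (b ⟨i, h⟩) else LinearMap.id)

open Finset

section Relations

variable {F A ι : Type*} [CommRing F] [Ring A] [Algebra F A]

def relationCoeffIdeal (e : ι → A) (s : Finset ι) (i : ι) : TwoSidedIdeal A :=
  .mk' {z | ∃ c : ι → A, (∀ y, ∑ j ∈ s, e j * y * c j = 0) ∧ c i = z}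
    ⟨0, by simp, rfl⟩
    (by
      rintro _ _ ⟨c, hc, rfl⟩ ⟨d, hd, rfl⟩
      exact ⟨c + d, fun y => by simp [mul_add, sum_add_distrib, hc, hd], rfl⟩)
    (by
      rintro _ ⟨c, hc, rfl⟩
      exact ⟨-c, fun y => by simp [hc], rfl⟩)
    (by
      rintro u _ ⟨c, hc, rfl⟩
      exact ⟨fun j => u * c j, fun y => by simpa [mul_assoc] using hc (y * u), rfl⟩)
    (by
      rintro _ u ⟨c, hc, rfl⟩
      exact ⟨fun j => c j * u, fun y => by simp [← mul_assoc, ← sum_mul, hc], rfl⟩)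

theorem mem_relationCoeffIdeal {e : ι → A} {s : Finset ι} {i : ι} {z : A} :
    z ∈ relationCoeffIdeal e s i ↔ ∃ c : ι → A, (∀ y, ∑ j ∈ s, e j * y * c j = 0) ∧ c i = z :=
  TwoSidedIdeal.mem_mk' ..

variable [IsSimpleRing A] [Algebra.IsCentral F A]

/-- Take a relation with `x i₀ ≠ 0` on a minimal `s`. By simplicity it can be normalised to
`c i₀ = 1`; then `j ↦ a * c j - c j * a` is a relation on `s.erase i₀`, so by minimality every
`c j` is central, i.e. a scalar, and `y = 1` gives a nontrivial linear relation among the `e j`. -/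
theorem eq_zero_of_forall_sum_mul_mul_eq_zero {e : ι → A} (he : LinearIndependent F e)
    (s : Finset ι) {x : ι → A} (hx : ∀ y, ∑ i ∈ s, e i * y * x i = 0) : ∀ i ∈ s, x i = 0 := by
  classical
  induction s using Finset.strongInduction generalizing x with
  | H s ih =>
  intro i₀ hi₀
  by_contra hne
  obtain ⟨c, hc, hci₀⟩ := mem_relationCoeffIdeal.1 <|
    IsSimpleRing.one_mem_of_ne_zero_mem _ hne (mem_relationCoeffIdeal.2 ⟨x, hx, rfl⟩)
  have hcenter : ∀ j ∈ s, c j ∈ Subalgebra.center F A := by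
    refine fun j hj => Subalgebra.mem_center_iff.2 fun a => ?_
    obtain rfl | hj₀ := eq_or_ne j i₀
    · simp [hci₀]
    have hcomm : ∀ y, ∑ l ∈ s.erase i₀, e l * y * (a * c l - c l * a) = 0 := fun y => by
      rw [sum_erase _ (by simp [hci₀])]
      simp only [mul_sub, sum_sub_distrib, ← mul_assoc, ← sum_mul, hc, zero_mul, sub_zero]
      simpa [mul_assoc] using hc (y * a)
    exact sub_eq_zero.1 (ih _ (erase_ssubset hi₀) hcomm j (mem_erase.2 ⟨hj₀, hj⟩))
  choose! r hr using fun j hj => (Algebra.IsCentral.mem_center_iff F).1 (hcenter j hj)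
  have hrel : ∑ j ∈ s, r j • e j = 0 := by
    rw [← hc 1]
    refine sum_congr rfl fun j hj => ?_
    rw [hr j hj, mul_one, Algebra.smul_def, Algebra.commutes]
  have h₀ := hr i₀ hi₀
  rw [linearIndependent_iff'.1 he s r hrel i₀ hi₀, map_zero, hci₀] at h₀
  exact one_ne_zero h₀

theorem linearIndependent_mul_mul {κ B : Type*} {e : ι → A} (he : LinearIndependent F e)
    {v : κ → B → A} (hv : LinearIndependent F v) :
    LinearIndependent F fun p : ι × κ => fun x : A × B => e p.1 * x.1 * v p.2 x.2 := by
  rw [linearIndependent_iff]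
  intro l hl
  have hcurry : ∀ i, l.curry i = 0 := by
    intro i
    refine linearIndependent_iff.1 hv _ (funext fun b => ?_)
    by_cases hi : i ∈ l.curry.support
    swap
    · simp [Finsupp.notMem_support_iff.1 hi]
    -- for fixed `b`, the one-variable case applies to the coefficients `∑ j, l (i, j) • v j b`
    refine eq_zero_of_forall_sum_mul_mul_eq_zero he l.curry.support
      (x := fun i => Finsupp.linearCombination F v (l.curry i) b) (fun y => ?_) i hi
    have := congrFun hl (y, b)
    rw [Finsupp.linearCombination_apply,
      ← Finsupp.sum_curry_index l fun i j c => c • fun x : A × B => e i * x.1 * v j x.2] at this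
    simpa [Finsupp.linearCombination_apply, Finsupp.sum, Finset.sum_apply, mul_sum,
      mul_smul_comm] using this
  rw [← Finsupp.uncurry_curry l, show l.curry = 0 from Finsupp.ext hcurry]
  rfl

end Relations

section InterleavedProd

variable {F A ι : Type*} [Ring A]

/-- `interleavedProd n a b = a 0 * b 0 * a 1 * ⋯ * b (n - 1) * a n`. -/
def interleavedProd : (n : ℕ) → (Fin (n + 1) → A) → (Fin n → A) → A
  | 0, a, _ => a 0
  | n + 1, a, b => a 0 * b 0 * interleavedProd n (Fin.tail a) (Fin.tail b)

theorem prod_ofFn_eq_interleavedProd (n : ℕ) (a : Fin (n + 1) → A) (b : Fin n → A) :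
    (List.ofFn fun i : Fin (n + 1) => if h : (i : ℕ) < n then a i * b ⟨i, h⟩ else a i).prod =
      interleavedProd n a b := by
  induction n with
  | zero => simp [interleavedProd]
  | succ n ih =>
    rw [List.ofFn_succ, List.prod_cons, interleavedProd, ← ih]
    simp [Fin.tail, mul_assoc]

theorem linearIndependent_interleavedProd [CommRing F] [Algebra F A] [IsSimpleRing A]
    [Algebra.IsCentral F A] {e : ι → A} (he : LinearIndependent F e) (n : ℕ) :
    LinearIndependent F fun w : Fin (n + 1) → ι => interleavedProd n (e ∘ w) := by
  induction n with
  | zero =>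
    exact .of_comp (LinearMap.proj finZeroElim) (he.comp _ (Equiv.funUnique (Fin 1) ι).injective)
  | succ n ih =>
    refine (linearIndependent_equiv' (Fin.consEquiv fun _ => ι) ?_).1
      ((linearIndependent_mul_mul he ih).map' _
        (LinearEquiv.funCongrLeft F A (Fin.consEquiv fun _ => A).symm).ker)
    ext ⟨i, w⟩ b
    show interleavedProd (n + 1) (e ∘ Fin.cons i w) b =
      e i * b 0 * interleavedProd n (e ∘ w) (Fin.tail b)
    rfl

theorem evalGP_apply [Field F] [Algebra F A] (k : ℕ) (b : Fin (k + 1) → A)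
    (a : Fin (k + 2) → A) : evalGP F A k b a = interleavedProd (k + 1) a b := by
  rw [evalGP, MultilinearMap.compLinearMap_apply, MultilinearMap.mkPiAlgebraFin_apply,
    ← prod_ofFn_eq_interleavedProd]
  congr
  funext i
  split_ifs <;> rfl

end InterleavedProd

/-- If a multilinear generalized polynomial `f ∈ A^{⊗(k+2)}` over a simple ring
`A` with center `F` evaluates to zero for all substitutions of `y₀,…,y_k` by
elements of `A`, then `f = 0`. -/
theorem stmt_11 (F A : Type*) [Field F] [Ring A] [Algebra F A]
    [IsSimpleRing A] (hcentral : Subalgebra.center F A = ⊥) (k : ℕ)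
    (f : ⨂[F] (_ : Fin (k + 2)), A)
    (hf : ∀ b : Fin (k + 1) → A, PiTensorProduct.lift (evalGP F A k b) f = 0) :
    f = 0 := by
  have : Algebra.IsCentral F A := ⟨hcentral.le⟩
  let e := Module.Basis.ofVectorSpace F A
  let Φ : (⨂[F] _ : Fin (k + 2), A) →ₗ[F] (Fin (k + 1) → A) → A :=
    LinearMap.pi fun b => PiTensorProduct.lift (evalGP F A k b)
  have hΦ : Function.Injective Φ := by
    have hbasis : Φ ∘ (Basis.piTensorProduct fun _ => e) =
        fun w => interleavedProd (k + 1) (e ∘ w) := by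
      ext w b
      simp [Φ, Basis.piTensorProduct_apply, evalGP_apply, Function.comp_def]
    refine LinearMap.injective_of_linearIndependent (Basis.piTensorProduct fun _ => e).span_eq ?_
    rw [hbasis]
    exact linearIndependent_interleavedProd e.linearIndependent (k + 1)
  exact hΦ (funext hf |>.trans (map_zero Φ).symm)
end

section
/- Let f be a generalized polynomial over M_m(F) of degree h (an element of the free product M_m(F) * F⟨x₁,…,x_g⟩ with all words of length ≤ h), where F has characteristic 0. If f vanishes on all g-tuples of matrices of size m·⌈(h+1)/2⌉ (under the embedding a ↦ I_s ⊗ a of coefficients), then f = 0. -/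
open scoped TensorProduct Kronecker

/-- The embedding `M_m(F) → M_{ms}(F)`, `a ↦ I_s ⊗ a`, as a linear map. -/
def incl (F : Type*) [Field F] (m s : ℕ) :
    Matrix (Fin m) (Fin m) F →ₗ[F] Matrix (Fin s × Fin m) (Fin s × Fin m) F where
  toFun a := (1 : Matrix (Fin s) (Fin s) F) ⊗ₖ a
  map_add' a b := by
    ext ⟨i, i'⟩ ⟨j, j'⟩
    simp [Matrix.kroneckerMap, mul_add]
  map_smul' r a := by
    ext ⟨i, i'⟩ ⟨j, j'⟩
    simp [Matrix.kroneckerMap, smul_eq_mul]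
    ring

/-- Evaluation of the homogeneous component of a generalized polynomial attached
to the word `w = x_{w 0} ⋯ x_{w (ℓ-1)}` at the tuple `p` of matrices of size
`m·s`: the multilinear map `(a₀,…,a_ℓ) ↦ ι(a₀) p_{w 0} ι(a₁) ⋯ p_{w (ℓ-1)} ι(a_ℓ)`. -/
noncomputable def evalWord (F : Type*) [Field F] (m s g : ℕ)
    (p : Fin g → Matrix (Fin s × Fin m) (Fin s × Fin m) F) {ℓ : ℕ} (w : Fin ℓ → Fin g) :
    MultilinearMap F (fun _ : Fin (ℓ + 1) => Matrix (Fin m) (Fin m) F)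
      (Matrix (Fin s × Fin m) (Fin s × Fin m) F) :=
  (MultilinearMap.mkPiAlgebraFin F (ℓ + 1) _).compLinearMap
    (fun i => if h : (i : ℕ) < ℓ then
        (LinearMap.mulRight F (p (w ⟨i, h⟩))).comp (incl F m s)
      else incl F m s)

/-! Each homogeneous component `f ℓ w` is a tensor in `M_m^{⊗(ℓ+1)}`, and such a tensor is
determined by its values on `a ↦ a₀ c₀ a₁ ⋯ c_{ℓ-1} a_ℓ` (for matrix units `cᵢ` these values
are its coordinates). Fix `w` and `c` and substitute `p_i = ∑_{w j = i} t_j (E_j ⊗ c_j)`, with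
scalars `t_j` and the staircase of matrix units `E_j = e_{⌊j/2⌋, ⌊(j+1)/2⌋}`, which has size
`⌈(ℓ+1)/2⌉`. Since `F` is infinite, the coefficient of `t₀ ⋯ t_{ℓ-1}` in the result vanishes.
That coefficient collects the terms indexed by bijections `r` onto the letters of `w`, each
carrying the factor `E_{r 0} ⋯ E_{r (ℓ-1)}`. For a nonzero product consecutive indices can only
go up, so `r` is the identity. What remains is `(E₀ ⋯ E_{ℓ-1}) ⊗ (f ℓ w)(c) = 0` with
`E₀ ⋯ E_{ℓ-1} = e_{0, ⌊ℓ/2⌋} ≠ 0`. -/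

section Interleave

variable {R A B : Type*} [CommSemiring R] [Semiring A] [Algebra R A] [AddCommMonoid B]
  [Module R B]

/-- `a ↦ φ a₀ * c₀ * φ a₁ * ⋯ * c_{n-1} * φ aₙ`; `evalWord F m s g p w` is
`interleave (incl F m s) (p ∘ w)`. -/
noncomputable def interleave (φ : B →ₗ[R] A) {n : ℕ} (c : Fin n → A) :
    MultilinearMap R (fun _ : Fin (n + 1) => B) A :=
  (MultilinearMap.mkPiAlgebraFin R (n + 1) A).compLinearMap
    (fun i => if h : (i : ℕ) < n then (LinearMap.mulRight R (c ⟨i, h⟩)).comp φ else φ)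

theorem interleave_zero (φ : B →ₗ[R] A) (c : Fin 0 → A) (a : Fin 1 → B) :
    interleave φ c a = φ (a 0) := by
  simp [interleave]

theorem interleave_succ (φ : B →ₗ[R] A) {n : ℕ} (c : Fin (n + 1) → A) (a : Fin (n + 2) → B) :
    interleave φ c a = φ (a 0) * c 0 * interleave φ (Fin.tail c) (Fin.tail a) := by
  simp [interleave, List.ofFn_succ, Fin.tail, mul_assoc]

theorem interleave_eq_mul (φ : B →ₗ[R] A) {n : ℕ} (c : Fin n → A) (a : Fin (n + 1) → B) :
    interleave φ c a =
      (MultilinearMap.mkPiAlgebraFin R n A).compLinearMap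
        (fun i => LinearMap.mulLeft R (φ (a i.castSucc))) c * φ (a (Fin.last n)) := by
  simp only [interleave, MultilinearMap.compLinearMap_apply, MultilinearMap.mkPiAlgebraFin_apply,
    List.ofFn_succ', List.prod_concat]
  simp

noncomputable def interleaveLift (φ : B →ₗ[R] A) {n : ℕ} (t : ⨂[R] (_ : Fin (n + 1)), B) :
    MultilinearMap R (fun _ : Fin n => A) A where
  toFun c := PiTensorProduct.lift (interleave φ c) t
  map_update_add' c j x y := by
    have hupdate : interleave φ (Function.update c j (x + y)) =
        interleave φ (Function.update c j x) + interleave φ (Function.update c j y) := by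
      ext a
      simp only [interleave_eq_mul, MultilinearMap.map_update_add, add_mul, add_apply]
    rw [hupdate, map_add, LinearMap.add_apply]
  map_update_smul' c j r x := by
    have hupdate : interleave φ (Function.update c j (r • x)) =
        r • interleave φ (Function.update c j x) := by
      ext a
      simp only [interleave_eq_mul, MultilinearMap.map_update_smul, smul_mul_assoc, smul_apply]
    rw [hupdate, map_smul, LinearMap.smul_apply]

theorem interleaveLift_apply (φ : B →ₗ[R] A) {n : ℕ} (t : ⨂[R] (_ : Fin (n + 1)), B)
    (c : Fin n → A) : interleaveLift φ t c = PiTensorProduct.lift (interleave φ c) t := rfl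

end Interleave

theorem MultilinearMap.sum_map_substitute {R M N κ : Type*} [CommSemiring R] [AddCommMonoid M]
    [Module R M] [AddCommMonoid N] [Module R N] [Fintype κ] [DecidableEq κ] {n k : ℕ}
    (G : (Fin n → κ) → MultilinearMap R (fun _ : Fin n => M) N) (w : Fin k → κ)
    (t : Fin k → R) (E : Fin k → M) :
    ∑ w' : Fin n → κ, G w' (fun i => ∑ j, if w j = w' i then t j • E j else 0) =
      ∑ r : Fin n → Fin k, (∏ i, t (r i)) • G (w ∘ r) (E ∘ r) := by
  have expand : ∀ w', G w' (fun i => ∑ j, if w j = w' i then t j • E j else 0) =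
      ∑ r : Fin n → Fin k, if w ∘ r = w' then (∏ i, t (r i)) • G w' (E ∘ r) else 0 := by
    intro w'
    rw [MultilinearMap.map_sum]
    refine Finset.sum_congr rfl fun r _ => ?_
    split_ifs with hr
    · subst hr
      simp [← MultilinearMap.map_smul_univ]
    · obtain ⟨i, hi⟩ := Function.ne_iff.1 hr
      exact (G w').map_coord_zero i (if_neg hi)
  simp only [expand]
  rw [Finset.sum_comm]
  simp

namespace Matrix

section MatrixUnits

variable {R ι : Type*} [CommSemiring R] [Fintype ι] [DecidableEq ι]

theorem prod_ofFn_single_chain_apply {n : ℕ} (x : Fin (n + 1) → ι) :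
    (List.ofFn fun i : Fin n => single (x i.castSucc) (x i.succ) (1 : R)).prod
      (x 0) (x (Fin.last n)) = 1 := by
  induction n with
  | zero => simp [Fin.last]
  | succ n ih =>
    rw [List.ofFn_succ, List.prod_cons, mul_apply, Finset.sum_eq_single (x 1)]
    · simpa [Fin.tail] using ih (Fin.tail x)
    · intro k _ hk
      simp [Ne.symm hk]
    · simp

theorem chain_of_prod_ofFn_single_ne_zero {n : ℕ} (u v : Fin (n + 1) → ι)
    (h : (List.ofFn fun i => single (u i) (v i) (1 : R)).prod ≠ 0) (i : Fin n) :
    v i.castSucc = u i.succ := by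
  induction n with
  | zero => exact i.elim0
  | succ n ih =>
    rw [List.ofFn_succ, List.prod_cons] at h
    refine Fin.cases ?_ (fun i => ih (Fin.tail u) (Fin.tail v) (right_ne_zero_of_mul h) i) i
    by_contra hne
    rw [Fin.castSucc_zero] at hne
    rw [List.ofFn_succ, List.prod_cons, ← mul_assoc, single_mul_single_of_ne (h := hne),
      zero_mul] at h
    exact h rfl

theorem interleave_single_apply {n : ℕ} (x : Fin (n + 1) → ι × ι)
    (a : Fin (n + 1) → Matrix ι ι R) :
    interleave (LinearMap.id (R := R))
        (fun i : Fin n => single (x i.castSucc).2 (x i.succ).1 (1 : R)) a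
        (x 0).1 (x (Fin.last n)).2 = ∏ i, a i (x i).1 (x i).2 := by
  induction n with
  | zero => simp [interleave_zero]
  | succ n ih =>
    have htail : Fin.tail (fun i : Fin (n + 1) => single (x i.castSucc).2 (x i.succ).1 (1 : R)) =
        fun i : Fin n => single (Fin.tail x i.castSucc).2 (Fin.tail x i.succ).1 1 := rfl
    have hhead : (a 0 * single (x 0).2 (Fin.tail x 0).1 (1 : R)) (x 0).1 (Fin.tail x 0).1 =
        a 0 (x 0).1 (x 0).2 := by
      simp
    rw [interleave_succ, htail, mul_apply, Finset.sum_eq_single (Fin.tail x 0).1,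
      Fin.prod_univ_succ, ← hhead]
    · exact congrArg₂ (· * ·) rfl (ih (Fin.tail x) (Fin.tail a))
    · intro k _ hk
      have hk' : k ≠ (x 1).1 := hk
      simp [hk']
    · simp

theorem eq_zero_of_forall_lift_interleave {n : ℕ} (t : ⨂[R] (_ : Fin (n + 1)), Matrix ι ι R)
    (h : ∀ c : Fin n → Matrix ι ι R, PiTensorProduct.lift (interleave LinearMap.id c) t = 0) :
    t = 0 := by
  let b := Basis.piTensorProduct fun _ : Fin (n + 1) => stdBasis R ι ι
  have hcoord : ∀ (u : ⨂[R] (_ : Fin (n + 1)), Matrix ι ι R) (x : Fin (n + 1) → ι × ι),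
      b.repr u x = PiTensorProduct.lift (interleave LinearMap.id
        fun i : Fin n => single (x i.castSucc).2 (x i.succ).1 (1 : R)) u
          (x 0).1 (x (Fin.last n)).2 := by
    intro u x
    induction u using PiTensorProduct.induction_on with
    | smul_tprod r a => simp [b, interleave_single_apply, stdBasis]
    | add u u' hu hu' => simp [hu, hu']
  refine b.ext_elem fun x => ?_
  rw [hcoord, h, map_zero]
  rfl

end MatrixUnits

theorem eq_zero_of_kronecker_eq_zero {R l m n p : Type*} [MulZeroClass R] [NoZeroDivisors R]
    {A : Matrix l m R} {B : Matrix n p R} (hA : A ≠ 0) (h : A ⊗ₖ B = 0) : B = 0 := by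
  obtain ⟨a, b, hab⟩ : ∃ a b, A a b ≠ 0 := by
    by_contra! hA'
    exact hA (Matrix.ext hA')
  ext i j
  simpa [hab] using congr_fun (congr_fun h (a, i)) (b, j)

end Matrix

section Incl

variable {F : Type*} [Field F] {m s : ℕ}

theorem interleave_incl_kronecker {n : ℕ} (A : Fin n → Matrix (Fin s) (Fin s) F)
    (c : Fin n → Matrix (Fin m) (Fin m) F) (a : Fin (n + 1) → Matrix (Fin m) (Fin m) F) :
    interleave (incl F m s) (fun i => A i ⊗ₖ c i) a =
      (List.ofFn A).prod ⊗ₖ interleave (LinearMap.id (R := F)) c a := by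
  induction n with
  | zero => simp [interleave_zero, incl]
  | succ n ih =>
    have htail : Fin.tail (fun i => A i ⊗ₖ c i) = fun i => Fin.tail A i ⊗ₖ Fin.tail c i := rfl
    rw [interleave_succ, interleave_succ, htail, ih, List.ofFn_succ, List.prod_cons]
    simp [incl, ← Matrix.mul_kronecker_mul, Fin.tail_def]

theorem lift_interleave_incl_kronecker {n : ℕ} (A : Fin n → Matrix (Fin s) (Fin s) F)
    (c : Fin n → Matrix (Fin m) (Fin m) F)
    (t : ⨂[F] (_ : Fin (n + 1)), Matrix (Fin m) (Fin m) F) :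
    PiTensorProduct.lift (interleave (incl F m s) fun i => A i ⊗ₖ c i) t =
      (List.ofFn A).prod ⊗ₖ PiTensorProduct.lift (interleave (LinearMap.id (R := F)) c) t := by
  induction t using PiTensorProduct.induction_on with
  | smul_tprod r a => simp [interleave_incl_kronecker, Matrix.kronecker_smul]
  | add t t' ht ht' => simp [ht, ht', Matrix.kronecker_add]

end Incl

theorem sum_filter_eq_zero_of_forall_eval_monomial {F σ ι V : Type*} [Field F] [Infinite F]
    [DecidableEq σ] [AddCommGroup V] [Module F V] (s : Finset ι) (d : ι → σ →₀ ℕ) (v : ι → V)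
    (h : ∀ t : σ → F, ∑ i ∈ s, MvPolynomial.eval t (MvPolynomial.monomial (d i) 1) • v i = 0)
    (e : σ →₀ ℕ) : ∑ i ∈ s with d i = e, v i = 0 := by
  refine (Module.forall_dual_apply_eq_zero_iff F _).1 fun φ => ?_
  have hpoly : ∑ i ∈ s, MvPolynomial.monomial (d i) (φ (v i)) = 0 :=
    MvPolynomial.funext fun t => by
      simpa [MvPolynomial.eval_monomial, mul_comm] using congrArg φ (h t)
  rw [map_sum]
  simpa [MvPolynomial.coeff_sum, MvPolynomial.coeff_monomial, Finset.sum_filter, eq_comm]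
    using congrArg (MvPolynomial.coeff e) hpoly

theorem Function.bijective_of_sum_single_eq {α β : Type*} [Fintype α] [Fintype β]
    [DecidableEq β] {r : α → β}
    (h : ∑ a, Finsupp.single (r a) 1 = ∑ b, Finsupp.single b (1 : ℕ)) : Bijective r := by
  refine bijective_iff_existsUnique r |>.2 fun b => ?_
  have hfiber : (Finset.univ.filter fun a => r a = b).card = 1 := by
    have hb := DFunLike.congr_fun h b
    simp only [Finsupp.finsetSum_apply, Finsupp.single_apply, Finset.sum_boole] at hb
    simpa [Finset.filter_eq'] using hb
  obtain ⟨a, ha⟩ := Finset.card_eq_one.1 hfiber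
  refine ⟨a, ?_, fun a' ha' => ?_⟩
  · simpa using (Finset.ext_iff.1 ha a).2 (Finset.mem_singleton_self a)
  · simpa using (Finset.ext_iff.1 ha a').1 (by simpa using ha')

/-- The coefficient of `t₀ ⋯ t_{n-1}` in the evaluation at `p_i = ∑_{w j = i} t_j E_j`. -/
theorem sum_multilinearPart_eq_zero {F : Type*} [Field F] [Infinite F] {m s g h : ℕ}
    (f : (ℓ : Fin (h + 1)) → (Fin ℓ → Fin g) →
      ⨂[F] (_ : Fin ((ℓ : ℕ) + 1)), Matrix (Fin m) (Fin m) F)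
    (hvan : ∀ p : Fin g → Matrix (Fin s × Fin m) (Fin s × Fin m) F,
      ∑ ℓ : Fin (h + 1), ∑ w : Fin ℓ → Fin g,
        PiTensorProduct.lift (evalWord F m s g p w) (f ℓ w) = 0)
    {n : ℕ} (w : Fin n → Fin g) (E : Fin n → Matrix (Fin s × Fin m) (Fin s × Fin m) F) :
    ∑ x ∈ (Finset.univ : Finset (Σ ℓ : Fin (h + 1), Fin ℓ → Fin n))
        with ∑ i, Finsupp.single (x.2 i) 1 = ∑ j, Finsupp.single j 1,
      interleaveLift (incl F m s) (f x.1 (w ∘ x.2)) (E ∘ x.2) = 0 := by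
  refine sum_filter_eq_zero_of_forall_eval_monomial (F := F) _ _ _ (fun t => ?_) _
  rw [← hvan fun i => ∑ j, if w j = i then t j • E j else 0, Fintype.sum_sigma]
  refine Finset.sum_congr rfl fun ℓ _ => ?_
  refine Eq.trans (Finset.sum_congr rfl fun r _ => ?_)
    (MultilinearMap.sum_map_substitute (fun w' => interleaveLift (incl F m s) (f ℓ w')) w t E).symm
  simp [MvPolynomial.monomial_sum_one, MvPolynomial.eval_monomial]

section Staircase

variable (F : Type*) [Field F] {s ℓ : ℕ} (hℓ : ℓ < 2 * s)

def stairVertex (k : Fin (ℓ + 1)) : Fin s := ⟨k / 2, by omega⟩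

noncomputable def stair (j : Fin ℓ) : Matrix (Fin s) (Fin s) F :=
  Matrix.single (stairVertex hℓ j.castSucc) (stairVertex hℓ j.succ) 1

variable {F}

theorem prod_ofFn_stair_ne_zero : (List.ofFn (stair F hℓ)).prod ≠ 0 := fun h0 => by
  have hentry : (List.ofFn (stair F hℓ)).prod (stairVertex hℓ 0) (stairVertex hℓ (Fin.last ℓ)) =
      1 :=
    Matrix.prod_ofFn_single_chain_apply _
  rw [h0] at hentry
  exact zero_ne_one hentry

theorem monotone_of_prod_ofFn_stair_ne_zero {n : ℕ} {r : Fin n → Fin ℓ}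
    (hr : (List.ofFn fun i => stair F hℓ (r i)).prod ≠ 0) : Monotone r := by
  cases n with
  | zero => exact fun i => i.elim0
  | succ n =>
    refine Fin.monotone_iff_le_succ.2 fun i => ?_
    have hchain := congrArg Fin.val (Matrix.chain_of_prod_ofFn_single_ne_zero _ _ hr i)
    simp only [stairVertex, Fin.val_succ, Fin.val_castSucc] at hchain
    rw [Fin.le_iff_val_le_val]
    omega

theorem eq_id_of_prod_ofFn_stair_ne_zero {r : Fin ℓ → Fin ℓ} (hinj : Function.Injective r)
    (hr : (List.ofFn fun i => stair F hℓ (r i)).prod ≠ 0) : r = id :=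
  ((monotone_of_prod_ofFn_stair_ne_zero hℓ hr).strictMono_of_injective hinj).eq_id

end Staircase

theorem stmt_12_general (F : Type*) [Field F] [CharZero F] (m g h : ℕ)
    (f : (ℓ : Fin (h + 1)) → (Fin ℓ → Fin g) →
      ⨂[F] (_ : Fin ((ℓ : ℕ) + 1)), Matrix (Fin m) (Fin m) F)
    (hvan : ∀ p : Fin g → Matrix (Fin ((h + 2) / 2) × Fin m) (Fin ((h + 2) / 2) × Fin m) F,
      ∑ ℓ : Fin (h + 1), ∑ w : Fin ℓ → Fin g,
        PiTensorProduct.lift (evalWord F m ((h + 2) / 2) g p w) (f ℓ w) = 0) :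
    ∀ (ℓ : Fin (h + 1)) (w : Fin ℓ → Fin g), f ℓ w = 0 := by
  intro ℓ w
  have hℓ : (ℓ : ℕ) < 2 * ((h + 2) / 2) := by omega
  refine Matrix.eq_zero_of_forall_lift_interleave _ fun c => ?_
  have hsum := sum_multilinearPart_eq_zero f hvan w fun j => stair F hℓ j ⊗ₖ c j
  rw [Finset.sum_eq_single_of_mem ⟨ℓ, id⟩ (by simp) ?_] at hsum
  · refine Matrix.eq_zero_of_kronecker_eq_zero (prod_ofFn_stair_ne_zero hℓ) ?_
    simpa [interleaveLift_apply, Function.comp_def, lift_interleave_incl_kronecker] using hsum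
  · rintro ⟨ℓ', r⟩ hr hne
    suffices hprod : (List.ofFn fun i => stair F hℓ (r i)).prod = 0 by
      simp [interleaveLift_apply, Function.comp_def, lift_interleave_incl_kronecker, hprod]
    by_contra hprod
    have hbij := Function.bijective_of_sum_single_eq (Finset.mem_filter.1 hr).2
    obtain rfl : ℓ' = ℓ := Fin.ext (by simpa using Fintype.card_of_bijective hbij)
    exact hne (by rw [eq_id_of_prod_ofFn_stair_ne_zero (r := r) hℓ hbij.1 hprod])

/-- A generalized polynomial over `M_m(F)` of degree `h` (given by its tensor
coefficients for each word of length `ℓ ≤ h`) that vanishes on all `g`-tuples of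
matrices of size `m·⌈(h+1)/2⌉` is zero. -/
theorem stmt_12 (F : Type*) [Field F] [CharZero F] (m g h : ℕ) (hm : 0 < m)
    (f : (ℓ : Fin (h + 1)) → (Fin ℓ → Fin g) →
      ⨂[F] (_ : Fin ((ℓ : ℕ) + 1)), Matrix (Fin m) (Fin m) F)
    (hvan : ∀ p : Fin g → Matrix (Fin ((h + 2) / 2) × Fin m) (Fin ((h + 2) / 2) × Fin m) F,
      ∑ ℓ : Fin (h + 1), ∑ w : Fin ℓ → Fin g,
        PiTensorProduct.lift (evalWord F m ((h + 2) / 2) g p w) (f ℓ w) = 0) :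
    ∀ (ℓ : Fin (h + 1)) (w : Fin ℓ → Fin g), f ℓ w = 0 :=
  stmt_12_general F m g h f hvan
end

section
/- Let F be a field and S a noncommutative formal power series over F. Define the Hankel module (smallest stable subspace) H_S as the F-span of {L_v S : v a word}, where (L_v S, w) = (S, vw). Then S is recognizable if and only if H_S is finite-dimensional over F; and in that case, dim_F H_S equals the minimal dimension of a linear representation of S. -/
open Matrix

/-! If `S` has a representation `(c, A, b)` of dimension `n`, every shift `L_v S` is the
combination `w ↦ (c A^v) (A^w b)` of the `n` series `w ↦ (A^w b)_i`, so `H_S` has dimension at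
most `n`. Conversely, `H_S` is stable under the letter shifts `L_a`; in a basis `(g_i)` of `H_S`
the matrices of these shifts, the coordinates of `S` and the values `g_i(ε)` form a
representation of dimension `dim H_S`. -/

/-- The set of dimensions of linear representations of a series `S`. -/
def repDims {F σ : Type*} [Field F] (S : List σ → F) : Set ℕ :=
  {n | ∃ (c : Fin n → F) (A : σ → Matrix (Fin n) (Fin n) F) (b : Fin n → F),
    ∀ w : List σ, S w = c ⬝ᵥ ((w.map A).prod).mulVec b}

/-- The Hankel module of `S`: the span of all left shifts `L_v S`. -/
def hankel {F σ : Type*} [Field F] (S : List σ → F) : Submodule F (List σ → F) :=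
  Submodule.span F (Set.range fun v : List σ => fun w => S (v ++ w))

section

variable {F σ : Type*} [Field F]

def shiftLeft (a : σ) : (List σ → F) →ₗ[F] (List σ → F) where
  toFun f w := f (a :: w)
  map_add' _ _ := rfl
  map_smul' _ _ := rfl

theorem self_mem_hankel (S : List σ → F) : S ∈ hankel S :=
  Submodule.subset_span ⟨[], rfl⟩

theorem shiftLeft_mem_hankel (S : List σ → F) (a : σ) {f : List σ → F} (hf : f ∈ hankel S) :
    shiftLeft a f ∈ hankel S := by
  suffices (hankel S).map (shiftLeft a) ≤ hankel S from this ⟨f, hf, rfl⟩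
  rw [hankel, Submodule.map_span, Submodule.span_le]
  rintro - ⟨-, ⟨v, rfl⟩, rfl⟩
  exact Submodule.subset_span ⟨v ++ [a], by funext w; simp [shiftLeft]⟩

def columnSeries {ι : Type*} [Fintype ι] [DecidableEq ι] (A : σ → Matrix ι ι F) (b : ι → F)
    (i : ι) : List σ → F :=
  fun w => ((w.map A).prod *ᵥ b) i

theorem hankel_le_span_columnSeries {n : ℕ} (S : List σ → F) (c : Fin n → F)
    (A : σ → Matrix (Fin n) (Fin n) F) (b : Fin n → F)
    (h : ∀ w, S w = c ⬝ᵥ (w.map A).prod *ᵥ b) :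
    hankel S ≤ Submodule.span F (Set.range (columnSeries A b)) := by
  rw [hankel, Submodule.span_le]
  rintro - ⟨v, rfl⟩
  have hshift : (fun w => S (v ++ w)) = ∑ i, (c ᵥ* (v.map A).prod) i • columnSeries A b i := by
    funext w
    simp only [Finset.sum_apply, Pi.smul_apply, smul_eq_mul, columnSeries]
    rw [h, List.map_append, List.prod_append, ← mulVec_mulVec, dotProduct_mulVec]
    rfl
  change (fun w => S (v ++ w)) ∈ _
  rw [hshift]
  exact Submodule.sum_mem _ fun i _ => Submodule.smul_mem _ _ (Submodule.subset_span ⟨i, rfl⟩)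

variable {S : List σ → F} {n : ℕ}

theorem finite_hankel_of_mem_repDims (hn : n ∈ repDims S) : Module.Finite F (hankel S) := by
  obtain ⟨c, A, b, h⟩ := hn
  have := FiniteDimensional.span_of_finite F (Set.finite_range (columnSeries A b))
  exact Submodule.finiteDimensional_of_le (hankel_le_span_columnSeries S c A b h)

theorem finrank_hankel_le_of_mem_repDims (hn : n ∈ repDims S) :
    Module.finrank F (hankel S) ≤ n := by
  obtain ⟨c, A, b, h⟩ := hn
  have := FiniteDimensional.span_of_finite F (Set.finite_range (columnSeries A b))
  calc Module.finrank F (hankel S)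
      ≤ (Set.range (columnSeries A b)).finrank F :=
        Submodule.finrank_mono (hankel_le_span_columnSeries S c A b h)
    _ ≤ n := by simpa using finrank_range_le_card (R := F) (columnSeries A b)

end

section ShiftStable

variable {F σ ι : Type*} [Field F] [Fintype ι] {V : Submodule F (List σ → F)}
  (hV : ∀ a, ∀ f ∈ V, shiftLeft a f ∈ V) (g : Module.Basis ι F V)

theorem coe_apply_eq_sum_repr (x : V) (w : List σ) :
    (x : List σ → F) w = ∑ j, g.repr x j * (g j : List σ → F) w := by
  conv_lhs => rw [← g.sum_repr x]
  simp only [Submodule.coe_sum, Submodule.coe_smul, Finset.sum_apply, Pi.smul_apply, smul_eq_mul]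

variable [DecidableEq ι]

/-- Row `i` of `shiftMatrix hV g a` holds the coordinates of `L_a g_i` in the basis `g`. -/
noncomputable def shiftMatrix (a : σ) : Matrix ι ι F :=
  (LinearMap.toMatrix g g ((shiftLeft a).restrict (hV a)))ᵀ

theorem basis_eq_columnSeries (i : ι) :
    (g i : List σ → F) = columnSeries (shiftMatrix hV g) (fun j => (g j : List σ → F) []) i := by
  funext w
  induction w generalizing i with
  | nil => simp [columnSeries]
  | cons a w ih =>
    calc (g i : List σ → F) (a :: w)
        = ((shiftLeft a).restrict (hV a) (g i) : List σ → F) w := rfl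
      _ = ∑ j, shiftMatrix hV g a i j * (g j : List σ → F) w := by
        rw [coe_apply_eq_sum_repr g]
        simp [shiftMatrix, LinearMap.toMatrix_apply]
      _ = _ := by
        simp only [ih, columnSeries, List.map_cons, List.prod_cons, ← mulVec_mulVec]
        rfl

end ShiftStable

theorem finrank_mem_repDims_of_shiftLeft_mem {F σ : Type*} [Field F]
    {V : Submodule F (List σ → F)} [Module.Finite F V] (hV : ∀ a, ∀ f ∈ V, shiftLeft a f ∈ V)
    {f : List σ → F} (hf : f ∈ V) : Module.finrank F V ∈ repDims f := by
  let g := Module.finBasis F V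
  refine ⟨g.repr ⟨f, hf⟩, shiftMatrix hV g, fun i => (g i : List σ → F) [], fun w => ?_⟩
  refine (coe_apply_eq_sum_repr g ⟨f, hf⟩ w).trans (Finset.sum_congr rfl fun i _ => ?_)
  rw [basis_eq_columnSeries hV g i]
  rfl

theorem stmt_15_general {F σ : Type*} [Field F] (S : List σ → F) :
    ((repDims S).Nonempty ↔ Module.Finite F (hankel S)) ∧
    ((repDims S).Nonempty → Module.finrank F (hankel S) = sInf (repDims S)) := by
  have rep_of_finite (_ : Module.Finite F (hankel S)) :
      Module.finrank F (hankel S) ∈ repDims S :=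
    finrank_mem_repDims_of_shiftLeft_mem (fun a _ => shiftLeft_mem_hankel S a)
      (self_mem_hankel S)
  refine ⟨⟨fun ⟨_, hn⟩ => finite_hankel_of_mem_repDims hn, fun h => ⟨_, rep_of_finite h⟩⟩, ?_⟩
  rintro ⟨n, hn⟩
  have := finite_hankel_of_mem_repDims hn
  exact le_antisymm (le_csInf ⟨n, hn⟩ fun m hm => finrank_hankel_le_of_mem_repDims hm)
    (Nat.sInf_le (rep_of_finite this))

/-- `S` is recognizable iff its Hankel module is finite-dimensional, in which
case `dim_F H_S` equals the minimal dimension of a linear representation of `S`. -/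
theorem stmt_15 {F σ : Type*} [Field F] [Fintype σ] (S : List σ → F) :
    ((repDims S).Nonempty ↔ Module.Finite F (hankel S)) ∧
    ((repDims S).Nonempty → Module.finrank F (hankel S) = sInf (repDims S)) :=
  stmt_15_general S
end
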